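/- arXiv:2509.25051 — 2 statements merged into one kernel-verified Lean document; each statement's English description precedes it below -/
import Mathlib

section
/- Let k_b, k_b' : X × X → ℝ be kernels with ‖k_b‖_∞ ≤ 1, ‖k_b'‖_∞ ≤ 1, and k_b'(x,x) = 1 for all x. Define k_avg from k_b and k_max from k_b' via a finite group G acting on X. If k_avg = k_max on the double orbit O(x, g·x) for every x ∈ X and g ∈ G, then k_b(h·x, h'·g·x) = 1 = k_max(x, g·x) for all h, h', g ∈ G and all x. -/
/-- If kavg (built from kb) equals kmax (built from kb') on every double orbit
O(x, g•x), with ‖kb‖∞ ≤ 1, ‖kb'‖∞ ≤ 1 and kb'(x,x) = 1, then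
kb(h•x, h'•(g•x)) = 1 = kmax(x, g•x) for all h, h', g and all x. -/
theorem stmt2 {X G : Type*} [Group G] [Fintype G] [MulAction G X]
    (kb kb' : X → X → ℝ)
    (hkb : ∀ x y : X, |kb x y| ≤ 1) (hkb' : ∀ x y : X, |kb' x y| ≤ 1)
    (hdiag : ∀ x : X, kb' x x = 1)
    (kavg : X → X → ℝ)
    (hkavg : ∀ x x' : X, kavg x x' =
      (1 / (Fintype.card G : ℝ) ^ 2) * ∑ h : G, ∑ h' : G, kb (h • x) (h' • x'))
    (kmax : X → X → ℝ)
    (hkmax : ∀ x x' : X, kmax x x' =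
      (Finset.univ : Finset (G × G)).sup' ⟨(1, 1), Finset.mem_univ _⟩
        (fun p => kb' (p.1 • x) (p.2 • x')))
    (heq : ∀ (x : X) (g h h' : G),
      kavg (h • x) (h' • (g • x)) = kmax (h • x) (h' • (g • x))) :
    ∀ (x : X) (g h h' : G),
      kb (h • x) (h' • (g • x)) = 1 ∧ kmax x (g • x) = 1 := by
  have hmax1 : ∀ (y : X) (g : G), kmax y (g • y) = 1 := by
    intro y g
    rw [hkmax]
    apply le_antisymm
    · apply Finset.sup'_le
      intro p _
      exact (abs_le.mp (hkb' _ _)).2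
    · have := Finset.le_sup' (f := fun p : G × G => kb' (p.1 • y) (p.2 • (g • y)))
        (Finset.mem_univ (g, (1 : G)))
      simpa [hdiag] using this
  intro x g h h'
  have hmax : kmax (h • x) (h' • (g • x)) = 1 := by
    have hx : h' • (g • x) = (h' * g * h⁻¹) • (h • x) := by
      simp [smul_smul, mul_assoc]
    rw [hx]; exact hmax1 _ _
  refine ⟨?_, hmax1 x g⟩
  have havg : kavg (h • x) (h' • (g • x)) = 1 := by rw [heq, hmax]
  rw [hkavg] at havg
  have hn : (0 : ℝ) < (Fintype.card G : ℝ) := by exact_mod_cast Fintype.card_pos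
  have hsum : ∑ p : G × G, kb (p.1 • (h • x)) (p.2 • (h' • (g • x)))
      = (Fintype.card G : ℝ) ^ 2 := by
    rw [Fintype.sum_prod_type]
    field_simp at havg
    linarith [havg]
  by_contra hne
  have hlt : kb ((1 : G) • (h • x)) ((1 : G) • (h' • (g • x))) < 1 := by
    simp only [one_smul]
    exact lt_of_le_of_ne (abs_le.mp (hkb _ _)).2 hne
  have hlt2 : ∑ p : G × G, kb (p.1 • (h • x)) (p.2 • (h' • (g • x)))
      < ∑ _p : G × G, (1 : ℝ) := by
    apply Finset.sum_lt_sum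
    · intro p _; exact (abs_le.mp (hkb _ _)).2
    · exact ⟨((1 : G), (1 : G)), Finset.mem_univ _, hlt⟩
  rw [hsum, Finset.sum_const, Finset.card_univ, Fintype.card_prod] at hlt2
  simp only [nsmul_eq_mul, Nat.cast_mul] at hlt2
  nlinarith [hlt2]
end

section
/- For SO(2) acting on ℝ² and the RBF kernel with lengthscale l, the orbit-averaged kernel has the closed form k_avg(x,x') = exp(-(r² + s²)/(2l²)) · I₀(rs/l²), where r = ‖x‖, s = ‖x'‖, and I₀(z) = (1/2π) ∫₀^{2π} exp(z cos ψ) dψ is the modified Bessel function of order 0. -/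
lemma shift_int (A t : ℝ) :
    ∫ β in (0:ℝ)..(2*Real.pi), Real.exp (A * Real.cos (β - t))
      = ∫ ψ in (0:ℝ)..(2*Real.pi), Real.exp (A * Real.cos ψ) := by
  have hp : Function.Periodic (fun ψ => Real.exp (A * Real.cos ψ)) (2*Real.pi) := by
    intro ψ; simp [Real.cos_add_two_pi]
  rw [intervalIntegral.integral_comp_sub_right (fun ψ => Real.exp (A * Real.cos ψ)) t]
  rw [show (2*Real.pi - t) = 0 - t + 2*Real.pi by ring,
     hp.intervalIntegral_add_eq (0 - t) 0, zero_add]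

lemma abs_sq_expand (x x' : ℂ) (α β : ℝ) :
    (‖Complex.exp (α * Complex.I) * x - Complex.exp (β * Complex.I) * x'‖)^2
      = (‖x‖)^2 + (‖x'‖)^2
        - 2 * (‖x‖ * ‖x'‖) *
          Real.cos ((α - β) + Complex.arg (x * (starRingEnd ℂ) x')) := by
  set w := x * (starRingEnd ℂ) x' with hwdef
  have hw := Complex.norm_mul_cos_add_sin_mul_I w
  have hre : w.re = ‖w‖ * Real.cos w.arg := by
    conv_lhs => rw [← hw]
    simp
  have him : w.im = ‖w‖ * Real.sin w.arg := by
    conv_lhs => rw [← hw]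
    simp
  have habsw : ‖w‖ = ‖x‖ * ‖x'‖ := by
    rw [hwdef, norm_mul, Complex.norm_conj]
  have hc : (starRingEnd ℂ) (Complex.exp (β*Complex.I)) = Complex.exp (-(β*Complex.I)) := by
    rw [← Complex.exp_conj]
    simp
  have hm : Complex.exp (α * Complex.I) * x *
      (starRingEnd ℂ) (Complex.exp (β * Complex.I) * x')
      = Complex.exp ((↑(α - β)) * Complex.I) * w := by
    rw [map_mul, hc, show ((↑(α - β) : ℂ)) * Complex.I = α*Complex.I + -(β*Complex.I) by
      push_cast; ring, Complex.exp_add, hwdef]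
    ring
  rw [Complex.sq_norm, Complex.normSq_sub, hm]
  rw [Complex.mul_re, Complex.exp_ofReal_mul_I_re, Complex.exp_ofReal_mul_I_im,
    hre, him, habsw]
  rw [← Complex.sq_norm (Complex.exp (↑α * Complex.I) * x),
    ← Complex.sq_norm (Complex.exp (↑β * Complex.I) * x'), norm_mul, norm_mul,
    Complex.norm_exp_ofReal_mul_I, Complex.norm_exp_ofReal_mul_I, one_mul, one_mul]
  rw [Real.cos_add]
  ring

/-- Orbit-averaged RBF kernel under planar rotations (ℝ² ≅ ℂ): with r = ‖x‖,
s = ‖x'‖, k_avg(x,x') = exp(-(r²+s²)/(2l²)) · I₀(rs/l²) where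
I₀(z) = (1/2π)∫₀^{2π} exp(z cos ψ) dψ. -/
theorem stmt4 (l : ℝ) (hl : 0 < l) (x x' : ℂ) :
    (1 / (2 * Real.pi) ^ 2) *
        ∫ α in (0 : ℝ)..(2 * Real.pi), ∫ β in (0 : ℝ)..(2 * Real.pi),
          Real.exp (-(‖Complex.exp (α * Complex.I) * x -
            Complex.exp (β * Complex.I) * x'‖) ^ 2 / (2 * l ^ 2))
      = Real.exp (-((‖x‖) ^ 2 + (‖x'‖) ^ 2) / (2 * l ^ 2)) *
          ((1 / (2 * Real.pi)) * ∫ ψ in (0 : ℝ)..(2 * Real.pi),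
            Real.exp ((‖x‖ * ‖x'‖ / l ^ 2) * Real.cos ψ)) := by
  have hl2 : (l:ℝ)^2 ≠ 0 := pow_ne_zero 2 hl.ne'
  set δ := Complex.arg (x * (starRingEnd ℂ) x') with hδ
  set A := ‖x‖ * ‖x'‖ / l ^ 2 with hA
  set E := Real.exp (-((‖x‖) ^ 2 + (‖x'‖) ^ 2) / (2 * l ^ 2)) with hE
  set I := ∫ ψ in (0 : ℝ)..(2 * Real.pi), Real.exp (A * Real.cos ψ) with hI
  have hinner : ∀ α : ℝ, (∫ β in (0:ℝ)..(2*Real.pi),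
      Real.exp (-(‖Complex.exp (α * Complex.I) * x -
        Complex.exp (β * Complex.I) * x'‖) ^ 2 / (2 * l ^ 2))) = E * I := by
    intro α
    have hpt : ∀ β : ℝ, Real.exp (-(‖Complex.exp (α * Complex.I) * x -
        Complex.exp (β * Complex.I) * x'‖) ^ 2 / (2 * l ^ 2))
        = E * Real.exp (A * Real.cos (β - (α + δ))) := by
      intro β
      rw [abs_sq_expand, ← hδ]
      rw [show Real.cos (β - (α + δ)) = Real.cos (α - β + δ) by
        rw [show (α - β + δ) = -(β - (α + δ)) by ring, Real.cos_neg]]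
      rw [hE, hA, ← Real.exp_add]
      congr 1
      field_simp
      ring
    rw [intervalIntegral.integral_congr (g := fun β =>
        E * Real.exp (A * Real.cos (β - (α + δ)))) (fun β _ => hpt β)]
    rw [intervalIntegral.integral_const_mul, shift_int, ← hI]
  simp only [hinner]
  rw [intervalIntegral.integral_const, smul_eq_mul]
  have hπ : (2 * Real.pi) ≠ 0 := by positivity
  field_simp
  ring
end
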